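/- arXiv:2012.03758 — 5 statements merged into one kernel-verified Lean document; each statement's English description precedes it below -/
import Mathlib

section
/- If Z₁,…,Zₙ are independent real random variables, each symmetric around 0, then for every x ≠ 0, |P(Sₙ/Vₙ ≤ x) − Φ(x)| ≤ (1 + 1/(√(2π)|x|)) e^{-x²/2}, where Sₙ = Z₁+⋯+Zₙ and Vₙ = √(Z₁²+⋯+Zₙ²). -/
open Real MeasureTheory ProbabilityTheory Finset Set
open scoped ENNReal

/-- Standard normal CDF. -/
noncomputable def stdNormalCDF (t : ℝ) : ℝ :=
  ∫ s in Set.Iic t, Real.exp (-s ^ 2 / 2) / Real.sqrt (2 * Real.pi)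


lemma detHoeffding (n : ℕ) (z : Fin n → ℝ) (y : ℝ) (hy : 0 < y) :
    ∑ s : Fin n → Bool,
      (if y * Real.sqrt (∑ i, z i ^ 2) ≤ ∑ i, (if s i then z i else -z i) ∧ 0 < ∑ i, z i ^ 2
        then (1:ℝ) else 0)
      ≤ 2 ^ n * Real.exp (-y ^ 2 / 2) := by
  by_cases hz : 0 < ∑ i, z i ^ 2
  · set v := Real.sqrt (∑ i, z i ^ 2) with hv_def
    have hv : 0 < v := Real.sqrt_pos.2 hz
    have hv2 : v ^ 2 = ∑ i, z i ^ 2 := Real.sq_sqrt hz.le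
    set lam := y / v with hlam_def
    have hlyv : lam * (y * v) = y ^ 2 := by rw [hlam_def]; field_simp
    have step1 : ∀ s : Fin n → Bool,
        (if y * v ≤ ∑ i, (if s i then z i else -z i) ∧ 0 < ∑ i, z i ^ 2 then (1:ℝ) else 0)
          ≤ Real.exp (lam * (∑ i, (if s i then z i else -z i)) - y ^ 2) := by
      intro s
      split_ifs with h
      · rw [← Real.exp_zero]
        apply Real.exp_le_exp.2
        have h1 : lam * (y * v) ≤ lam * ∑ i, (if s i then z i else -z i) :=
          mul_le_mul_of_nonneg_left h.1 (by positivity)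
        linarith [hlyv ▸ h1]
      · positivity
    calc ∑ s : Fin n → Bool, (if y * v ≤ ∑ i, (if s i then z i else -z i) ∧ 0 < ∑ i, z i ^ 2
          then (1:ℝ) else 0)
        ≤ ∑ s : Fin n → Bool, Real.exp (lam * (∑ i, (if s i then z i else -z i)) - y ^ 2) :=
          Finset.sum_le_sum fun s _ => step1 s
      _ = Real.exp (-y ^ 2) * ∑ s : Fin n → Bool, ∏ i, Real.exp (lam * (if s i then z i else -z i)) := by
          rw [Finset.mul_sum]
          refine Finset.sum_congr rfl fun s _ => ?_
          rw [← Real.exp_sum, ← Real.exp_add, Finset.mul_sum]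
          ring_nf
      _ = Real.exp (-y ^ 2) * ∏ i, (Real.exp (lam * z i) + Real.exp (-(lam * z i))) := by
          congr 1
          rw [← Fintype.prod_sum (fun i (b : Bool) => Real.exp (lam * (if b then z i else -z i)))]
          refine Finset.prod_congr rfl fun i _ => ?_
          simp [Fintype.sum_bool, mul_neg]
      _ ≤ Real.exp (-y ^ 2) * ∏ i, (2 * Real.exp ((lam * z i) ^ 2 / 2)) := by
          apply mul_le_mul_of_nonneg_left _ (Real.exp_nonneg _)
          apply Finset.prod_le_prod (fun i _ => by positivity)
          intro i _
          have := Real.cosh_le_exp_half_sq (lam * z i)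
          rw [Real.cosh_eq] at this
          linarith
      _ = 2 ^ n * Real.exp (-y ^ 2 / 2) := by
          rw [Finset.prod_mul_distrib, Finset.prod_const, ← Real.exp_sum]
          have : ∑ i, (lam * z i) ^ 2 / 2 = y ^ 2 / 2 := by
            rw [← Finset.sum_div]
            congr 1
            have h1 : ∑ i, (lam * z i) ^ 2 = lam ^ 2 * ∑ i, z i ^ 2 := by
              rw [Finset.mul_sum]
              exact Finset.sum_congr rfl fun i _ => by ring
            rw [h1, ← hv2, hlam_def]
            field_simp
          rw [this, Finset.card_univ, Fintype.card_fin, ← mul_assoc]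
          rw [mul_comm (Real.exp (-y ^ 2)) ((2:ℝ) ^ n), mul_assoc, ← Real.exp_add,
            show -y ^ 2 + y ^ 2 / 2 = -y ^ 2 / 2 by ring]
  · have : ∀ s : Fin n → Bool,
        (if y * Real.sqrt (∑ i, z i ^ 2) ≤ ∑ i, (if s i then z i else -z i) ∧ 0 < ∑ i, z i ^ 2
          then (1:ℝ) else 0) = 0 := fun s => by simp [hz]
    rw [Finset.sum_congr rfl fun s _ => this s]
    simp
    positivity


lemma map_tuple_eq_pi {Ω : Type*} [MeasurableSpace Ω] (μ : Measure Ω) [IsProbabilityMeasure μ]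
    (n : ℕ) (Z : Fin n → Ω → ℝ) (hmeas : ∀ i, Measurable (Z i))
    (hindep : iIndepFun Z μ) :
    Measure.pi (fun i => μ.map (Z i)) = μ.map (fun ω i => Z i ω) := by
  haveI : ∀ i, IsProbabilityMeasure (μ.map (Z i)) :=
    fun i => Measure.isProbabilityMeasure_map (hmeas i).aemeasurable
  refine Measure.pi_eq fun s hs => ?_
  rw [Measure.map_apply (measurable_pi_lambda _ hmeas) (MeasurableSet.univ_pi hs)]
  have h1 : (fun ω i => Z i ω) ⁻¹' (Set.pi Set.univ s) = ⋂ i ∈ Finset.univ, Z i ⁻¹' s i := by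
    ext ω; simp [Set.mem_pi]
  rw [h1, hindep.measure_inter_preimage_eq_mul Finset.univ (fun i _ => hs i)]
  exact Finset.prod_congr rfl fun i _ => (Measure.map_apply (hmeas i) (hs i)).symm

lemma core_bound {Ω : Type*} [MeasurableSpace Ω] (μ : Measure Ω) [IsProbabilityMeasure μ]
    (n : ℕ) (Z : Fin n → Ω → ℝ) (hmeas : ∀ i, Measurable (Z i))
    (hindep : iIndepFun Z μ)
    (hsym : ∀ i, Measure.map (Z i) μ = Measure.map (fun ω => -(Z i ω)) μ)
    (y : ℝ) (hy : 0 < y) :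
    μ {ω | y * Real.sqrt (∑ i, Z i ω ^ 2) ≤ ∑ i, Z i ω ∧ 0 < ∑ i, Z i ω ^ 2}
      ≤ ENNReal.ofReal (Real.exp (-y ^ 2 / 2)) := by
  classical
  -- the set on the product space
  set A : Set (Fin n → ℝ) :=
    {z | y * Real.sqrt (∑ i, z i ^ 2) ≤ ∑ i, z i ∧ 0 < ∑ i, z i ^ 2} with hA_def
  have hsum_meas : Measurable fun z : Fin n → ℝ => ∑ i, z i :=
    Finset.measurable_sum _ (fun i _ => measurable_pi_apply i)
  have hq_meas : Measurable fun z : Fin n → ℝ => ∑ i, z i ^ 2 :=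
    Finset.measurable_sum _ (fun i _ => (measurable_pi_apply i).pow_const 2)
  have hA : MeasurableSet A := by
    apply MeasurableSet.inter
    · exact measurableSet_le ((Real.continuous_sqrt.measurable.comp hq_meas).const_mul y) hsum_meas
    · exact measurableSet_lt measurable_const hq_meas
  set pm : Measure (Fin n → ℝ) := Measure.pi (fun i => μ.map (Z i)) with hpm_def
  -- flipped families
  have key : ∀ s : Fin n → Bool,
      pm A = μ {ω | y * Real.sqrt (∑ i, Z i ω ^ 2)
          ≤ ∑ i, (if s i then Z i ω else -Z i ω) ∧ 0 < ∑ i, Z i ω ^ 2} := by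
    intro s
    set W : Fin n → Ω → ℝ := fun i ω => if s i then Z i ω else -Z i ω with hW_def
    have hWmeas : ∀ i, Measurable (W i) := by
      intro i
      cases hsi : s i with
      | false => simpa [hW_def, hsi] using hmeas i
      | true => simpa [hW_def, hsi] using hmeas i
    have hWindep : iIndepFun W μ :=
      hindep.comp (fun i (t : ℝ) => if s i then t else -t)
        (fun i => by
          cases hsi : s i with
          | false => simpa [hsi] using (measurable_neg : Measurable fun t : ℝ => -t)
          | true => simpa [hsi] using (measurable_id' : Measurable fun t : ℝ => t))
    have hWmap : ∀ i, μ.map (W i) = μ.map (Z i) := by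
      intro i; cases hsi : s i
      · simp only [hW_def, hsi, if_false]
        exact ((hsym i).symm : Measure.map (fun ω => -(Z i ω)) μ = Measure.map (Z i) μ)
      · simp [hW_def, hsi]
    have hpm2W : pm = μ.map (fun ω i => W i ω) := by
      rw [hpm_def, show (fun i => μ.map (Z i)) = fun i => μ.map (W i) by
        ext1 i; rw [hWmap i]]
      exact map_tuple_eq_pi μ n W hWmeas hWindep
    rw [hpm2W, Measure.map_apply (measurable_pi_lambda _ hWmeas) hA]
    congr 1
    ext ω
    have hsq : ∑ i, W i ω ^ 2 = ∑ i, Z i ω ^ 2 := by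
      refine Finset.sum_congr rfl fun i _ => ?_
      cases hsi : s i <;> simp [hW_def, hsi]
    simp only [Set.mem_preimage, hA_def, Set.mem_setOf_eq, hsq, hW_def]
    simp only [hW_def] at hsq; rw [hsq]
  -- sum over all sign patterns
  have hcard : (2 ^ n : ℝ≥0∞) * pm A = ∑ s : Fin n → Bool,
      μ {ω | y * Real.sqrt (∑ i, Z i ω ^ 2)
          ≤ ∑ i, (if s i then Z i ω else -Z i ω) ∧ 0 < ∑ i, Z i ω ^ 2} := by
    rw [Finset.sum_congr rfl fun s _ => (key s).symm, Finset.sum_const, Finset.card_univ]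
    simp [Fintype.card_fun, nsmul_eq_mul]
  -- bound the sum by a lintegral
  have hEmeas : ∀ s : Fin n → Bool, MeasurableSet {ω | y * Real.sqrt (∑ i, Z i ω ^ 2)
      ≤ ∑ i, (if s i then Z i ω else -Z i ω) ∧ 0 < ∑ i, Z i ω ^ 2} := by
    intro s
    have hQ : Measurable fun ω => ∑ i, Z i ω ^ 2 :=
      Finset.measurable_sum _ (fun i _ => ((hmeas i).pow_const 2))
    have hS : Measurable fun ω => ∑ i, (if s i then Z i ω else -Z i ω) := by
      apply Finset.measurable_sum
      intro i _
      cases hsi : s i with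
      | false => simpa [hsi] using hmeas i
      | true => simpa [hsi] using hmeas i
    apply MeasurableSet.inter
    · exact measurableSet_le ((Real.continuous_sqrt.measurable.comp hQ).const_mul y) hS
    · exact measurableSet_lt measurable_const hQ
  have hsum : ∑ s : Fin n → Bool,
      μ {ω | y * Real.sqrt (∑ i, Z i ω ^ 2)
          ≤ ∑ i, (if s i then Z i ω else -Z i ω) ∧ 0 < ∑ i, Z i ω ^ 2}
      ≤ ENNReal.ofReal (2 ^ n * Real.exp (-y ^ 2 / 2)) := by
    have h1 : ∀ s : Fin n → Bool, μ {ω | y * Real.sqrt (∑ i, Z i ω ^ 2)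
        ≤ ∑ i, (if s i then Z i ω else -Z i ω) ∧ 0 < ∑ i, Z i ω ^ 2}
        = ∫⁻ ω, ENNReal.ofReal (if y * Real.sqrt (∑ i, Z i ω ^ 2)
            ≤ ∑ i, (if s i then Z i ω else -Z i ω) ∧ 0 < ∑ i, Z i ω ^ 2 then (1:ℝ) else 0) ∂μ := by
      intro s
      rw [← lintegral_indicator_one (hEmeas s)]
      congr 1; ext ω
      by_cases h : (y * Real.sqrt (∑ i, Z i ω ^ 2)
          ≤ ∑ i, (if s i then Z i ω else -Z i ω)) ∧ 0 < ∑ i, Z i ω ^ 2 <;>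
        simp [Set.indicator_apply, Set.mem_setOf_eq, h]
    calc ∑ s : Fin n → Bool, μ _
        = ∫⁻ ω, ∑ s : Fin n → Bool, ENNReal.ofReal (if y * Real.sqrt (∑ i, Z i ω ^ 2)
            ≤ ∑ i, (if s i then Z i ω else -Z i ω) ∧ 0 < ∑ i, Z i ω ^ 2 then (1:ℝ) else 0) ∂μ := by
          rw [Finset.sum_congr rfl fun s _ => h1 s]
          rw [← lintegral_finset_sum]
          intro s _
          apply Measurable.ennreal_ofReal
          exact measurable_const.ite (hEmeas s) measurable_const
      _ ≤ ∫⁻ _, ENNReal.ofReal (2 ^ n * Real.exp (-y ^ 2 / 2)) ∂μ := by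
          apply lintegral_mono
          intro ω
          dsimp only
          rw [← ENNReal.ofReal_sum_of_nonneg (fun s _ => by positivity)]
          exact ENNReal.ofReal_le_ofReal (detHoeffding n (fun i => Z i ω) y hy)
      _ = ENNReal.ofReal (2 ^ n * Real.exp (-y ^ 2 / 2)) := by
          simp [lintegral_const]
  -- put it together
  have hμA : μ {ω | y * Real.sqrt (∑ i, Z i ω ^ 2) ≤ ∑ i, Z i ω ∧ 0 < ∑ i, Z i ω ^ 2} = pm A := by
    have hpm2Z : pm = μ.map (fun ω i => Z i ω) := map_tuple_eq_pi μ n Z hmeas hindep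
    rw [hpm2Z, Measure.map_apply (measurable_pi_lambda _ hmeas) hA]
    rfl
  rw [hμA]
  have h2 : (2 ^ n : ℝ≥0∞) * pm A ≤ (2 ^ n : ℝ≥0∞) * ENNReal.ofReal (Real.exp (-y ^ 2 / 2)) := by
    rw [hcard]
    refine hsum.trans_eq ?_
    rw [ENNReal.ofReal_mul (by positivity), ENNReal.ofReal_pow (by norm_num)]
    norm_num
  exact (ENNReal.mul_le_mul_iff_right (by positivity) (by simp [ENNReal.pow_ne_top])).mp h2



lemma gauss_eq : (fun s : ℝ => Real.exp (-s ^ 2 / 2)) = fun s => Real.exp (-(1/2) * s ^ 2) := by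
  ext s; ring_nf

lemma gauss_integrable : Integrable (fun s : ℝ => Real.exp (-s ^ 2 / 2) / Real.sqrt (2 * Real.pi)) := by
  apply Integrable.div_const
  rw [gauss_eq]
  exact integrable_exp_neg_mul_sq (by norm_num)

lemma gauss_total : ∫ s : ℝ, Real.exp (-s ^ 2 / 2) / Real.sqrt (2 * Real.pi) = 1 := by
  rw [integral_div, gauss_eq, integral_gaussian,
    show Real.pi / (1/2) = 2 * Real.pi by ring]
  have : Real.sqrt (2 * Real.pi) ≠ 0 := by positivity
  field_simp

lemma cdf_add_tail (t : ℝ) :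
    stdNormalCDF t + ∫ s in Set.Ioi t, Real.exp (-s ^ 2 / 2) / Real.sqrt (2 * Real.pi) = 1 := by
  rw [stdNormalCDF, ← gauss_total]
  exact intervalIntegral.integral_Iic_add_Ioi gauss_integrable.integrableOn gauss_integrable.integrableOn

lemma cdf_nonneg (t : ℝ) : 0 ≤ stdNormalCDF t :=
  setIntegral_nonneg measurableSet_Iic (fun s _ => by positivity)

lemma tail_nonneg (t : ℝ) : 0 ≤ ∫ s in Set.Ioi t, Real.exp (-s ^ 2 / 2) / Real.sqrt (2 * Real.pi) :=
  setIntegral_nonneg measurableSet_Ioi (fun s _ => by positivity)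

lemma cdf_le_one (t : ℝ) : stdNormalCDF t ≤ 1 := by
  have h1 := cdf_add_tail t
  have h2 := tail_nonneg t
  linarith

lemma gauss_deriv (x : ℝ) :
    HasDerivAt (fun s : ℝ => -Real.exp (-s ^ 2 / 2)) (x * Real.exp (-x ^ 2 / 2)) x := by
  have h1 : HasDerivAt (fun s : ℝ => -s ^ 2 / 2) (-x) x := by
    have h := ((hasDerivAt_pow 2 x).neg).div_const 2
    convert h using 1
    · rfl
    · rfl
    · rfl
    · simp; ring
  have h2 := (h1.exp).neg
  convert h2 using 1
  · rfl
  · rfl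
  · rfl
  · ring

lemma gauss_mul_integrableOn (a : ℝ) :
    IntegrableOn (fun s : ℝ => s * Real.exp (-s ^ 2 / 2)) (Set.Ioi a) := by
  have h : IntegrableOn (fun s : ℝ => s * Real.exp (-(1/2) * s ^ 2)) (Set.Ioi a) :=
    (integrable_mul_exp_neg_mul_sq (by norm_num)).integrableOn
  refine h.congr_fun (fun s _ => by ring_nf) measurableSet_Ioi

lemma gauss_antideriv (a : ℝ) :
    ∫ s in Set.Ioi a, s * Real.exp (-s ^ 2 / 2) = Real.exp (-a ^ 2 / 2) := by
  have htend : Filter.Tendsto (fun s : ℝ => -Real.exp (-s ^ 2 / 2)) Filter.atTop (nhds 0) := by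
    rw [show (0:ℝ) = -0 by ring]
    apply Filter.Tendsto.neg
    apply Real.tendsto_exp_atBot.comp
    apply Filter.Tendsto.atBot_div_const (by norm_num : (0:ℝ) < 2)
    exact Filter.tendsto_neg_atBot_iff.mpr (Filter.tendsto_pow_atTop two_ne_zero)
  have h := integral_Ioi_of_hasDerivAt_of_tendsto' (fun x _ => gauss_deriv x)
    (gauss_mul_integrableOn a) htend
  rw [h]; ring

lemma gauss_tail_bound (a : ℝ) (ha : 0 < a) :
    ∫ s in Set.Ioi a, Real.exp (-s ^ 2 / 2) / Real.sqrt (2 * Real.pi)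
      ≤ Real.exp (-a ^ 2 / 2) / (Real.sqrt (2 * Real.pi) * a) := by
  rw [integral_div]
  have key : ∫ s in Set.Ioi a, Real.exp (-s ^ 2 / 2) ≤ Real.exp (-a ^ 2 / 2) / a := by
    have hmono : ∫ s in Set.Ioi a, Real.exp (-s ^ 2 / 2)
        ≤ ∫ s in Set.Ioi a, (s / a) * Real.exp (-s ^ 2 / 2) := by
      apply setIntegral_mono_on
      · rw [gauss_eq]; exact (integrable_exp_neg_mul_sq (by norm_num)).integrableOn
      · have h2 : IntegrableOn (fun s : ℝ => s * Real.exp (-s ^ 2 / 2) / a) (Set.Ioi a) :=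
          (gauss_mul_integrableOn a).div_const a
        refine h2.congr_fun (fun s _ => by ring) measurableSet_Ioi
      · exact measurableSet_Ioi
      · intro s hs
        have h1 : (1:ℝ) ≤ s / a := (one_le_div ha).mpr (le_of_lt hs)
        nlinarith [Real.exp_pos (-s ^ 2 / 2)]
    have heq : ∫ s in Set.Ioi a, (s / a) * Real.exp (-s ^ 2 / 2)
        = (∫ s in Set.Ioi a, s * Real.exp (-s ^ 2 / 2)) / a := by
      rw [← integral_div]
      exact setIntegral_congr_fun measurableSet_Ioi (fun s _ => by ring)
    rw [heq, gauss_antideriv] at hmono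
    exact hmono
  have hsq : (0:ℝ) < Real.sqrt (2 * Real.pi) := by positivity
  calc (∫ s in Set.Ioi a, Real.exp (-s ^ 2 / 2)) / Real.sqrt (2 * Real.pi)
      ≤ (Real.exp (-a ^ 2 / 2) / a) / Real.sqrt (2 * Real.pi) := by gcongr
    _ = Real.exp (-a ^ 2 / 2) / (Real.sqrt (2 * Real.pi) * a) := by
        rw [div_div]; ring_nf

lemma gauss_neg_tail (a : ℝ) :
    stdNormalCDF (-a) = ∫ s in Set.Ioi a, Real.exp (-s ^ 2 / 2) / Real.sqrt (2 * Real.pi) := by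
  rw [stdNormalCDF, ← integral_comp_neg_Ioi]
  exact setIntegral_congr_fun measurableSet_Ioi (fun s _ => by rw [neg_pow]; ring_nf)


/-- Lemma 2: Berry–Esseen-type tail bound for the self-normalized sum of
independent symmetric random variables. -/
theorem stmt1 {Ω : Type*} [MeasurableSpace Ω] (μ : Measure Ω) [IsProbabilityMeasure μ]
    (n : ℕ) (Z : Fin n → Ω → ℝ) (hmeas : ∀ i, Measurable (Z i))
    (hindep : iIndepFun Z μ)
    (hsym : ∀ i, Measure.map (Z i) μ = Measure.map (fun ω => -(Z i ω)) μ)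
    (x : ℝ) (hx : x ≠ 0) :
    |(μ {ω | (∑ i, Z i ω) / Real.sqrt (∑ i, (Z i ω) ^ 2) ≤ x}).toReal - stdNormalCDF x|
      ≤ (1 + 1 / (Real.sqrt (2 * Real.pi) * |x|)) * Real.exp (-x ^ 2 / 2) := by
  classical
  have hSmeas : Measurable fun ω => ∑ i, Z i ω := Finset.measurable_sum _ fun i _ => hmeas i
  have hQmeas : Measurable fun ω => ∑ i, (Z i ω) ^ 2 :=
    Finset.measurable_sum _ fun i _ => (hmeas i).pow_const 2
  have hVmeas : Measurable fun ω => Real.sqrt (∑ i, (Z i ω) ^ 2) :=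
    Real.continuous_sqrt.measurable.comp hQmeas
  have hE : MeasurableSet {ω | (∑ i, Z i ω) / Real.sqrt (∑ i, (Z i ω) ^ 2) ≤ x} :=
    measurableSet_le (hSmeas.div hVmeas) measurable_const
  set p := (μ {ω | (∑ i, Z i ω) / Real.sqrt (∑ i, (Z i ω) ^ 2) ≤ x}).toReal with hp_def
  have hp0 : 0 ≤ p := ENNReal.toReal_nonneg
  have hp1 : p ≤ 1 := by
    rw [hp_def]
    exact ENNReal.toReal_le_of_le_ofReal zero_le_one (by simpa using prob_le_one)
  have hΦ0 := cdf_nonneg x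
  have hΦ1 := cdf_le_one x
  have hexp0 : (0:ℝ) < Real.exp (-x ^ 2 / 2) := Real.exp_pos _
  have hc : (0:ℝ) < Real.sqrt (2 * Real.pi) := by positivity
  have hq0 : ∀ ω, (0:ℝ) ≤ ∑ i, (Z i ω) ^ 2 := fun ω => Finset.sum_nonneg fun i _ => sq_nonneg _
  rcases hx.lt_or_gt with hxneg | hxpos
  · -- case x < 0
    have hax : |x| = -x := abs_of_neg hxneg
    have hΦtail : stdNormalCDF x ≤ Real.exp (-x ^ 2 / 2) / (Real.sqrt (2 * Real.pi) * (-x)) := by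
      have h1 := gauss_neg_tail (-x)
      rw [neg_neg] at h1
      rw [h1]
      have h2 := gauss_tail_bound (-x) (by linarith)
      rwa [neg_sq] at h2
    have hptail : p ≤ Real.exp (-x ^ 2 / 2) := by
      have hWmeas : ∀ i, Measurable (fun ω => -(Z i ω)) := fun i => (hmeas i).neg
      have hWindep : iIndepFun (fun i ω => -(Z i ω)) μ :=
        hindep.comp (fun _ => Neg.neg) (fun _ => measurable_neg)
      have hWsym : ∀ i, Measure.map (fun ω => -(Z i ω)) μ
          = Measure.map (fun ω => -(-(Z i ω))) μ := by
        intro i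
        simp only [neg_neg]
        exact (hsym i).symm
      have hcore := core_bound μ n (fun i ω => -(Z i ω)) hWmeas hWindep hWsym (-x)
        (by linarith)
      have hsub : {ω | (∑ i, Z i ω) / Real.sqrt (∑ i, (Z i ω) ^ 2) ≤ x} ⊆
          {ω | (-x) * Real.sqrt (∑ i, (-(Z i ω)) ^ 2) ≤ ∑ i, -(Z i ω)
            ∧ 0 < ∑ i, (-(Z i ω)) ^ 2} := by
        intro ω hω
        simp only [Set.mem_setOf_eq] at hω ⊢
        simp only [neg_sq, Finset.sum_neg_distrib]
        have hQpos : 0 < ∑ i, (Z i ω) ^ 2 := by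
          rcases (hq0 ω).lt_or_eq with h | h
          · exact h
          · exfalso
            rw [← h, Real.sqrt_zero, div_zero] at hω
            linarith
        have hV : 0 < Real.sqrt (∑ i, (Z i ω) ^ 2) := Real.sqrt_pos.2 hQpos
        have hSle : (∑ i, Z i ω) ≤ x * Real.sqrt (∑ i, (Z i ω) ^ 2) :=
          (div_le_iff₀ hV).1 hω
        exact ⟨by linarith, hQpos⟩
      have h3 := (measure_mono hsub).trans hcore
      rw [neg_sq] at h3
      rw [hp_def]
      exact ENNReal.toReal_le_of_le_ofReal hexp0.le h3
    rw [hax, abs_sub_le_iff]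
    have hring : (1 + 1 / (Real.sqrt (2 * Real.pi) * -x)) * Real.exp (-x ^ 2 / 2)
        = Real.exp (-x ^ 2 / 2)
          + Real.exp (-x ^ 2 / 2) / (Real.sqrt (2 * Real.pi) * -x) := by ring
    have hdivpos : (0:ℝ) ≤ Real.exp (-x ^ 2 / 2) / (Real.sqrt (2 * Real.pi) * -x) := by
      apply div_nonneg hexp0.le
      have : (0:ℝ) < -x := by linarith
      positivity
    constructor <;> rw [hring] <;> linarith
  · -- case 0 < x
    have hax : |x| = x := abs_of_pos hxpos
    have htail := gauss_tail_bound x hxpos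
    have hcdf := cdf_add_tail x
    have hΦtail : 1 - stdNormalCDF x
        ≤ Real.exp (-x ^ 2 / 2) / (Real.sqrt (2 * Real.pi) * x) := by linarith
    have hptail : 1 - p ≤ Real.exp (-x ^ 2 / 2) := by
      have hcore := core_bound μ n Z hmeas hindep hsym x hxpos
      have hsub : {ω | (∑ i, Z i ω) / Real.sqrt (∑ i, (Z i ω) ^ 2) ≤ x}ᶜ ⊆
          {ω | x * Real.sqrt (∑ i, (Z i ω) ^ 2) ≤ ∑ i, Z i ω ∧ 0 < ∑ i, (Z i ω) ^ 2} := by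
        intro ω hω
        simp only [Set.mem_compl_iff, Set.mem_setOf_eq, not_le] at hω
        simp only [Set.mem_setOf_eq]
        have hQpos : 0 < ∑ i, (Z i ω) ^ 2 := by
          rcases (hq0 ω).lt_or_eq with h | h
          · exact h
          · exfalso
            rw [← h, Real.sqrt_zero, div_zero] at hω
            linarith
        have hV : 0 < Real.sqrt (∑ i, (Z i ω) ^ 2) := Real.sqrt_pos.2 hQpos
        have hSge : x * Real.sqrt (∑ i, (Z i ω) ^ 2) < ∑ i, Z i ω :=
          (lt_div_iff₀ hV).1 hω
        exact ⟨hSge.le, hQpos⟩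
      have h3 := (measure_mono hsub).trans hcore
      have h4 : (μ {ω | (∑ i, Z i ω) / Real.sqrt (∑ i, (Z i ω) ^ 2) ≤ x}ᶜ).toReal
          ≤ Real.exp (-x ^ 2 / 2) := ENNReal.toReal_le_of_le_ofReal hexp0.le h3
      have h5 : μ {ω | (∑ i, Z i ω) / Real.sqrt (∑ i, (Z i ω) ^ 2) ≤ x}ᶜ
          = 1 - μ {ω | (∑ i, Z i ω) / Real.sqrt (∑ i, (Z i ω) ^ 2) ≤ x} :=
        prob_compl_eq_one_sub hE
      rw [h5, ENNReal.toReal_sub_of_le prob_le_one ENNReal.one_ne_top, ENNReal.toReal_one,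
        ← hp_def] at h4
      exact h4
    rw [hax, abs_sub_le_iff]
    have hring : (1 + 1 / (Real.sqrt (2 * Real.pi) * x)) * Real.exp (-x ^ 2 / 2)
        = Real.exp (-x ^ 2 / 2)
          + Real.exp (-x ^ 2 / 2) / (Real.sqrt (2 * Real.pi) * x) := by ring
    have hdivpos : (0:ℝ) ≤ Real.exp (-x ^ 2 / 2) / (Real.sqrt (2 * Real.pi) * x) := by
      positivity
    constructor <;> rw [hring] <;> linarith
end

section
/- If Z₁,…,Zₙ are independent real random variables each symmetric around 0 (and not all almost surely zero on the event Vₙ > 0), then for every x > 0, P(Sₙ/Vₙ > x) ≤ e^{-x²/2}, where Sₙ = ∑ᵢ Zᵢ and Vₙ² = ∑ᵢ Zᵢ². -/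
open Real MeasureTheory ProbabilityTheory
open scoped ENNReal

/-- deterministic Hoeffding, counting form -/
lemma hoeffA {n : ℕ} (a : Fin n → ℝ) {x : ℝ} (hx : 0 < x) :
    ∑ ε : Fin n → Bool,
      (if x < (∑ i, (if ε i then a i else -(a i))) / Real.sqrt (∑ i, (a i) ^ 2) then (1:ℝ) else 0)
      ≤ 2 ^ n * Real.exp (-x ^ 2 / 2) := by
  by_cases hV : (∑ i, (a i) ^ 2) = 0
  · have ha : ∀ i, a i = 0 := by
      intro i
      have := (Finset.sum_eq_zero_iff_of_nonneg (fun i _ => sq_nonneg (a i))).mp hV i (Finset.mem_univ i)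
      nlinarith [this]
    have : ∀ ε : Fin n → Bool, ¬ (x < (∑ i, (if ε i then a i else -(a i))) / Real.sqrt (∑ i, (a i) ^ 2)) := by
      intro ε
      simp [ha, hV]
      linarith
    simp only [if_neg (this _)]
    simp
    positivity
  · have hVpos : 0 < ∑ i, (a i) ^ 2 :=
      lt_of_le_of_ne (Finset.sum_nonneg fun i _ => sq_nonneg (a i)) (Ne.symm hV)
    set V : ℝ := Real.sqrt (∑ i, (a i) ^ 2) with hVdef
    have hV0 : 0 < V := Real.sqrt_pos.mpr hVpos
    have hVsq : V ^ 2 = ∑ i, (a i) ^ 2 := Real.sq_sqrt hVpos.le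
    set t : ℝ := x / V with ht
    have ht0 : 0 < t := div_pos hx hV0
    have htV : t * V = x := div_mul_cancel₀ x hV0.ne'
    -- pointwise: 1_{x < S/V} ≤ exp (t*S - x^2/2 - x^2/2) ... we bound by exp(t*S - x^2)
    have step1 : ∀ ε : Fin n → Bool,
        (if x < (∑ i, (if ε i then a i else -(a i))) / V then (1:ℝ) else 0)
          ≤ Real.exp (t * (∑ i, (if ε i then a i else -(a i))) - x ^ 2) := by
      intro ε
      set S := ∑ i, (if ε i then a i else -(a i)) with hS
      split_ifs with h
      · have hxS : x * V < S := (lt_div_iff₀ hV0).mp h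
        have : 0 ≤ t * S - x ^ 2 := by
          have : t * (x * V) ≤ t * S := by nlinarith
          nlinarith [this, htV]
        exact Real.one_le_exp this
      · positivity
    calc ∑ ε : Fin n → Bool,
          (if x < (∑ i, (if ε i then a i else -(a i))) / V then (1:ℝ) else 0)
        ≤ ∑ ε : Fin n → Bool, Real.exp (t * (∑ i, (if ε i then a i else -(a i))) - x ^ 2) :=
          Finset.sum_le_sum fun ε _ => step1 ε
      _ = Real.exp (-x ^ 2) * ∑ ε : Fin n → Bool, ∏ i, Real.exp (t * (if ε i then a i else -(a i))) := by
          rw [Finset.mul_sum]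
          refine Finset.sum_congr rfl fun ε _ => ?_
          rw [← Real.exp_sum, ← Real.exp_add, ← Finset.mul_sum]
          ring_nf
      _ = Real.exp (-x ^ 2) * ∏ i, (Real.exp (t * a i) + Real.exp (-(t * a i))) := by
          congr 1
          rw [← Fintype.prod_sum (fun i (b : Bool) => Real.exp (t * (if b then a i else -(a i))))]
          refine Finset.prod_congr rfl fun i _ => ?_
          simp [mul_neg]
      _ ≤ Real.exp (-x ^ 2) * ∏ i, (2 * Real.exp ((t * a i) ^ 2 / 2)) := by
          refine mul_le_mul_of_nonneg_left (Finset.prod_le_prod (fun i _ => by positivity)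
            (fun i _ => ?_)) (Real.exp_nonneg _)
          have := Real.cosh_le_exp_half_sq (t * a i)
          rw [Real.cosh_eq] at this
          linarith
      _ = 2 ^ n * Real.exp (-x ^ 2 / 2) := by
          rw [Finset.prod_mul_distrib, Finset.prod_const, ← Real.exp_sum]
          have hsum : ∑ i, (t * a i) ^ 2 / 2 = x ^ 2 / 2 := by
            have : ∑ i, (t * a i) ^ 2 / 2 = t ^ 2 * (∑ i, (a i) ^ 2) / 2 := by
              rw [Finset.mul_sum, Finset.sum_div]
              exact Finset.sum_congr rfl fun i _ => by ring
            rw [this, ← hVsq]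
            field_simp
            nlinarith [htV]
          rw [hsum]
          have hcard : (Finset.univ : Finset (Fin n)).card = n := by
            simp
          rw [hcard, show Real.exp (-x ^ 2) * (2 ^ n * Real.exp (x ^ 2 / 2))
              = (2 : ℝ) ^ n * (Real.exp (-x ^ 2) * Real.exp (x ^ 2 / 2)) by ring,
            ← Real.exp_add]
          congr 1
          ring_nf

/-- The joint law of independent random variables is the product of the marginals. -/
lemma jointLaw {Ω : Type*} [MeasurableSpace Ω] (μ : Measure Ω) [IsProbabilityMeasure μ]
    {n : ℕ} {Z : Fin n → Ω → ℝ} (hmeas : ∀ i, Measurable (Z i))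
    (hindep : iIndepFun Z μ) :
    μ.map (fun ω i => Z i ω) = Measure.pi (fun i => μ.map (Z i)) := by
  have hpm : ∀ i, IsProbabilityMeasure (μ.map (Z i)) :=
    fun i => Measure.isProbabilityMeasure_map (hmeas i).aemeasurable
  refine (Measure.pi_eq fun s hs => ?_).symm
  rw [Measure.map_apply (measurable_pi_lambda _ hmeas) (MeasurableSet.univ_pi hs)]
  have hpre : (fun ω i => Z i ω) ⁻¹' Set.pi Set.univ s = ⋂ i ∈ Finset.univ, Z i ⁻¹' s i := by
    ext ω; simp [Set.mem_pi]
  rw [hpre, hindep.measure_inter_preimage_eq_mul Finset.univ (fun i _ => hs i)]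
  exact Finset.prod_congr rfl fun i _ => (Measure.map_apply (hmeas i) (hs i)).symm

/-- Sub-Gaussian upper tail of the self-normalized sum of independent
symmetric random variables (Wang–Jing, Lemma 4.3); `Sₙ/Vₙ` is interpreted
as `0` when `Vₙ = 0` (which is the Lean convention for division by zero). -/
theorem stmt2 {Ω : Type*} [MeasurableSpace Ω] (μ : Measure Ω) [IsProbabilityMeasure μ]
    (n : ℕ) (Z : Fin n → Ω → ℝ) (hmeas : ∀ i, Measurable (Z i))
    (hindep : iIndepFun Z μ)
    (hsym : ∀ i, Measure.map (Z i) μ = Measure.map (fun ω => -(Z i ω)) μ)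
    (x : ℝ) (hx : 0 < x) :
    (μ {ω | x < (∑ i, Z i ω) / Real.sqrt (∑ i, (Z i ω) ^ 2)}).toReal
      ≤ Real.exp (-x ^ 2 / 2) := by
  classical
  -- the target set in `ℝⁿ`
  set B : Set (Fin n → ℝ) := {y | x < (∑ i, y i) / Real.sqrt (∑ i, (y i) ^ 2)} with hBdef
  have hB : MeasurableSet B := by
    apply measurableSet_lt measurable_const
    exact (Finset.measurable_sum _ fun i _ => measurable_pi_apply i).div
      ((Finset.measurable_sum _ fun i _ => (measurable_pi_apply i).pow_const 2).sqrt)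
  -- sign-flipped random vectors
  set F : (Fin n → Bool) → Ω → (Fin n → ℝ) :=
    fun ε ω i => if ε i then Z i ω else -(Z i ω) with hFdef
  have hFZmeas : ∀ (ε : Fin n → Bool) (i : Fin n), Measurable (fun ω => F ε ω i) := by
    intro ε i
    by_cases h : ε i
    · simpa [hFdef, h] using hmeas i
    · simpa [hFdef, h] using hmeas i
  have hFmeas : ∀ ε : Fin n → Bool, Measurable (F ε) :=
    fun ε => measurable_pi_lambda _ (hFZmeas ε)
  -- all sign-flips have the same joint law
  have hmap : ∀ ε : Fin n → Bool, μ.map (F ε) = μ.map (fun ω i => Z i ω) := by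
    intro ε
    have hind' : iIndepFun
        (fun i => (fun y : ℝ => if ε i then y else -y) ∘ Z i) μ :=
      hindep.comp _ (fun i => by
        by_cases h : ε i
        · simpa [h] using (measurable_id' : Measurable (fun y : ℝ => y))
        · simpa [h] using (measurable_neg : Measurable (fun y : ℝ => -y)))
    have heq : (fun i => (fun y : ℝ => if ε i then y else -y) ∘ Z i)
        = fun i ω => F ε ω i := by
      funext i ω
      by_cases h : ε i <;> simp [hFdef, h, Function.comp]
    rw [heq] at hind'
    have h1 : μ.map (F ε) = Measure.pi (fun i => μ.map (fun ω => F ε ω i)) :=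
      jointLaw μ (hFZmeas ε) hind'
    have h2 : μ.map (fun ω i => Z i ω) = Measure.pi (fun i => μ.map (Z i)) :=
      jointLaw μ hmeas hindep
    rw [h1, h2]
    congr 1
    funext i
    by_cases h : ε i <;> simp only [hFdef, h, if_true, if_false]
    · exact (hsym i).symm
  -- each flipped event has the same measure as the original
  have hZvec : Measurable (fun ω i => Z i ω) := measurable_pi_lambda _ hmeas
  have hEev : {ω | x < (∑ i, Z i ω) / Real.sqrt (∑ i, (Z i ω) ^ 2)}
      = (fun ω i => Z i ω) ⁻¹' B := rfl
  have hmeasEq : ∀ ε : Fin n → Bool,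
      μ (F ε ⁻¹' B) = μ ((fun ω i => Z i ω) ⁻¹' B) := by
    intro ε
    rw [← Measure.map_apply (hFmeas ε) hB, ← Measure.map_apply hZvec hB, hmap ε]
  -- sum over all sign patterns
  have hsum : (2 ^ n : ℝ≥0∞) * μ ((fun ω i => Z i ω) ⁻¹' B)
      = ∑ ε : Fin n → Bool, μ (F ε ⁻¹' B) := by
    rw [Finset.sum_congr rfl (fun ε _ => hmeasEq ε), Finset.sum_const, Finset.card_univ]
    simp [nsmul_eq_mul]
  -- rewrite the sum as a lintegral and bound pointwise via `hoeffA`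
  have hEεmeas : ∀ ε : Fin n → Bool, MeasurableSet (F ε ⁻¹' B) := fun ε => (hFmeas ε) hB
  have hlint : ∑ ε : Fin n → Bool, μ (F ε ⁻¹' B)
      = ∫⁻ ω, ∑ ε : Fin n → Bool, (F ε ⁻¹' B).indicator (1 : Ω → ℝ≥0∞) ω ∂μ := by
    rw [lintegral_finset_sum _ (fun ε _ => measurable_one.indicator (hEεmeas ε))]
    exact Finset.sum_congr rfl fun ε _ => (lintegral_indicator_one (hEεmeas ε)).symm
  have hpt : ∀ ω : Ω, ∑ ε : Fin n → Bool, (F ε ⁻¹' B).indicator (1 : Ω → ℝ≥0∞) ω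
      ≤ ENNReal.ofReal (2 ^ n * Real.exp (-x ^ 2 / 2)) := by
    intro ω
    have hsq : ∀ (ε : Fin n → Bool), (∑ i, (F ε ω i) ^ 2) = ∑ i, (Z i ω) ^ 2 := by
      intro ε
      refine Finset.sum_congr rfl fun i _ => ?_
      by_cases h : ε i <;> simp [hFdef, h]
    have key := hoeffA (fun i => Z i ω) hx
    calc ∑ ε : Fin n → Bool, (F ε ⁻¹' B).indicator (1 : Ω → ℝ≥0∞) ω
        = ENNReal.ofReal (∑ ε : Fin n → Bool,
            (if x < (∑ i, (if ε i then Z i ω else -(Z i ω))) / Real.sqrt (∑ i, (Z i ω) ^ 2)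
              then (1:ℝ) else 0)) := by
          rw [ENNReal.ofReal_sum_of_nonneg (fun ε _ => by positivity)]
          refine Finset.sum_congr rfl fun ε _ => ?_
          have hmem : ω ∈ F ε ⁻¹' B ↔
              x < (∑ i, (if ε i then Z i ω else -(Z i ω))) / Real.sqrt (∑ i, (Z i ω) ^ 2) := by
            simp only [Set.mem_preimage, hBdef, Set.mem_setOf_eq, hsq ε]
            rfl
          by_cases h : x < (∑ i, (if ε i then Z i ω else -(Z i ω))) / Real.sqrt (∑ i, (Z i ω) ^ 2)
          · rw [Set.indicator_of_mem (hmem.mpr h), if_pos h]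
            simp
          · rw [Set.indicator_of_notMem (fun hc => h (hmem.mp hc)), if_neg h]
            simp
      _ ≤ ENNReal.ofReal (2 ^ n * Real.exp (-x ^ 2 / 2)) := ENNReal.ofReal_le_ofReal key
  -- put everything together
  have hbound : (2 ^ n : ℝ≥0∞) * μ ((fun ω i => Z i ω) ⁻¹' B)
      ≤ (2 ^ n : ℝ≥0∞) * ENNReal.ofReal (Real.exp (-x ^ 2 / 2)) := by
    rw [hsum, hlint]
    calc ∫⁻ ω, ∑ ε : Fin n → Bool, (F ε ⁻¹' B).indicator (1 : Ω → ℝ≥0∞) ω ∂μ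
        ≤ ∫⁻ _ω, ENNReal.ofReal (2 ^ n * Real.exp (-x ^ 2 / 2)) ∂μ :=
          lintegral_mono fun ω => hpt ω
      _ = ENNReal.ofReal (2 ^ n * Real.exp (-x ^ 2 / 2)) := by
          simp [lintegral_const]
      _ = (2 ^ n : ℝ≥0∞) * ENNReal.ofReal (Real.exp (-x ^ 2 / 2)) := by
          rw [ENNReal.ofReal_mul (by positivity)]
          congr 1
          rw [ENNReal.ofReal_pow (by norm_num : (0:ℝ) ≤ 2), ENNReal.ofReal_ofNat]
  have hfin : μ ((fun ω i => Z i ω) ⁻¹' B) ≤ ENNReal.ofReal (Real.exp (-x ^ 2 / 2)) := by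
    have h2n : (2 ^ n : ℝ≥0∞) ≠ 0 := by positivity
    have h2nt : (2 ^ n : ℝ≥0∞) ≠ ⊤ := by
      exact ENNReal.pow_ne_top (by norm_num)
    exact (ENNReal.mul_le_mul_iff_right h2n h2nt).mp hbound
  rw [hEev]
  exact ENNReal.toReal_le_of_le_ofReal (Real.exp_nonneg _) hfin
end

section
/- Let W₁,…,W_p be i.i.d. real random variables and S₁,…,S_p be i.i.d. real random variables. Then for all a₁ ≤ b₁, …, a_p ≤ b_p (with values in [−∞, ∞]), |∏_{j=1}^p P(W_j ∈ [a_j,b_j]) − ∏_{j=1}^p P(S_j ∈ [a_j,b_j])| ≤ ∑_{k=1}^p (∏_{j≠k} ℓ₁(−a_j)) d₁(−a_k) + ∑_{k=1}^p (∏_{j≠k} ℓ₂(b_j)) d₂(b_k), where ℓ₁(x) = max{P(−W₁ ≤ x), P(−S₁ ≤ x)}, d₁(x) = |P(−W₁ ≤ x) − P(−S₁ ≤ x)|, ℓ₂(x) = max{P(W₁ ≤ x), P(S₁ ≤ x)}, d₂(x) = |P(W₁ ≤ x) − P(S₁ ≤ x)|. -/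
open Real MeasureTheory ProbabilityTheory Finset

lemma prod_diff_bound {ι : Type*} [DecidableEq ι] (s : Finset ι) (u v c e : ι → ℝ)
    (hu : ∀ i ∈ s, 0 ≤ u i) (hv : ∀ i ∈ s, 0 ≤ v i)
    (huc : ∀ i ∈ s, u i ≤ c i) (hvc : ∀ i ∈ s, v i ≤ c i)
    (he : ∀ i ∈ s, |u i - v i| ≤ e i) :
    |∏ i ∈ s, u i - ∏ i ∈ s, v i| ≤ ∑ i ∈ s, (∏ j ∈ s.erase i, c j) * e i := by
  induction s using Finset.induction_on with
  | empty => simp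
  | @insert t s' ha ih =>
    simp only [prod_insert ha, sum_insert ha]
    have hus : ∀ i ∈ s', 0 ≤ u i := fun i hi => hu i (mem_insert_of_mem hi)
    have hvs : ∀ i ∈ s', 0 ≤ v i := fun i hi => hv i (mem_insert_of_mem hi)
    have hucs : ∀ i ∈ s', u i ≤ c i := fun i hi => huc i (mem_insert_of_mem hi)
    have hvcs : ∀ i ∈ s', v i ≤ c i := fun i hi => hvc i (mem_insert_of_mem hi)
    have hes : ∀ i ∈ s', |u i - v i| ≤ e i := fun i hi => he i (mem_insert_of_mem hi)
    have IH := ih hus hvs hucs hvcs hes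
    have h0ct : 0 ≤ c t := le_trans (hu t (mem_insert_self t s')) (huc t (mem_insert_self t s'))
    have key : u t * ∏ i ∈ s', u i - v t * ∏ i ∈ s', v i
        = u t * (∏ i ∈ s', u i - ∏ i ∈ s', v i) + (u t - v t) * ∏ i ∈ s', v i := by ring
    rw [key]
    have h1 : |u t * (∏ i ∈ s', u i - ∏ i ∈ s', v i)| ≤ c t * ∑ i ∈ s', (∏ j ∈ s'.erase i, c j) * e i := by
      rw [abs_mul]
      apply mul_le_mul (by rw [abs_of_nonneg (hu t (mem_insert_self t s'))]; exact huc t (mem_insert_self t s')) IH (abs_nonneg _) h0ct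
    have h2 : |(u t - v t) * ∏ i ∈ s', v i| ≤ e t * ∏ j ∈ s', c j := by
      rw [abs_mul]
      apply mul_le_mul (he t (mem_insert_self t s'))
        (by rw [abs_of_nonneg (prod_nonneg hvs)]; exact prod_le_prod hvs hvcs)
        (abs_nonneg _) (le_trans (abs_nonneg _) (he t (mem_insert_self t s')))
    calc |u t * (∏ i ∈ s', u i - ∏ i ∈ s', v i) + (u t - v t) * ∏ i ∈ s', v i|
        ≤ _ + _ := abs_add_le _ _
      _ ≤ c t * ∑ i ∈ s', (∏ j ∈ s'.erase i, c j) * e i + e t * ∏ j ∈ s', c j := add_le_add h1 h2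
      _ = (∏ j ∈ (insert t s').erase t, c j) * e t
            + ∑ i ∈ s', (∏ j ∈ (insert t s').erase i, c j) * e i := by
          rw [erase_insert ha, mul_sum]
          rw [add_comm, mul_comm (e t)]
          congr 1
          apply Finset.sum_congr rfl
          intro i hi
          rw [erase_insert_of_ne (by rintro rfl; exact ha hi), prod_insert (fun h => ha (mem_of_mem_erase h)), mul_assoc]

lemma interval_split {Ω : Type*} [MeasurableSpace Ω] (μ : Measure Ω) [IsProbabilityMeasure μ]
    (X : Ω → ℝ) (hX : Measurable X) (c d : EReal) (hcd : c ≤ d) :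
    (μ {ω | c ≤ (X ω : EReal) ∧ (X ω : EReal) ≤ d}).toReal
      = (μ {ω | (X ω : EReal) ≤ d}).toReal + (μ {ω | c ≤ (X ω : EReal)}).toReal - 1 := by
  set A : Set Ω := {ω | (X ω : EReal) ≤ d} with hA
  set B : Set Ω := {ω | c ≤ (X ω : EReal)} with hB
  have hXm : Measurable fun ω => (X ω : EReal) := measurable_coe_real_ereal.comp hX
  have hAm : MeasurableSet A := measurableSet_le hXm measurable_const
  have hBU : B ∪ A = Set.univ := by
    ext ω
    simp only [Set.mem_union, Set.mem_univ, iff_true, hA, hB, Set.mem_setOf_eq]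
    rcases le_or_gt (X ω : EReal) d with h | h
    · exact Or.inr h
    · exact Or.inl (le_trans hcd h.le)
  have hkey := measure_union_add_inter (μ := μ) B hAm
  rw [hBU, measure_univ] at hkey
  have hIT : B ∩ A = {ω | c ≤ (X ω : EReal) ∧ (X ω : EReal) ≤ d} := rfl
  rw [hIT] at hkey
  have h1 : (1 : ENNReal) ≠ ⊤ := ENNReal.one_ne_top
  have := congrArg ENNReal.toReal hkey
  rw [ENNReal.toReal_add h1 (measure_ne_top μ _), ENNReal.toReal_add (measure_ne_top μ _) (measure_ne_top μ _), ENNReal.toReal_one] at this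
  linarith

/-- Lemma 7 (i.i.d.-coordinate form): comparison of products of interval
probabilities for two i.i.d. families, with endpoints in `[-∞, ∞]` (`EReal`).
The conventions `P(W ≤ ∞) = 1` and `P(W ≤ -∞) = 0` are automatic. -/
theorem stmt6 {Ω : Type*} [MeasurableSpace Ω] (μ : Measure Ω) [IsProbabilityMeasure μ]
    (p : ℕ) (hp : 0 < p) (W S : Fin p → Ω → ℝ)
    (hWmeas : ∀ j, Measurable (W j)) (hSmeas : ∀ j, Measurable (S j))
    (hWindep : iIndepFun (m := fun _ => Real.measurableSpace) W μ)
    (hSindep : iIndepFun (m := fun _ => Real.measurableSpace) S μ)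
    (hWident : ∀ j, Measure.map (W j) μ = Measure.map (W ⟨0, hp⟩) μ)
    (hSident : ∀ j, Measure.map (S j) μ = Measure.map (S ⟨0, hp⟩) μ)
    (a b : Fin p → EReal) (hab : ∀ j, a j ≤ b j) :
    |(∏ j : Fin p, (μ {ω | a j ≤ (W j ω : EReal) ∧ (W j ω : EReal) ≤ b j}).toReal)
      - ∏ j : Fin p, (μ {ω | a j ≤ (S j ω : EReal) ∧ (S j ω : EReal) ≤ b j}).toReal|
    ≤ (∑ k : Fin p, (∏ j ∈ Finset.univ.erase k,
          max (μ {ω | ((-(W ⟨0, hp⟩ ω) : ℝ) : EReal) ≤ -(a j)}).toReal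
              (μ {ω | ((-(S ⟨0, hp⟩ ω) : ℝ) : EReal) ≤ -(a j)}).toReal) *
        |(μ {ω | ((-(W ⟨0, hp⟩ ω) : ℝ) : EReal) ≤ -(a k)}).toReal
          - (μ {ω | ((-(S ⟨0, hp⟩ ω) : ℝ) : EReal) ≤ -(a k)}).toReal|)
      + ∑ k : Fin p, (∏ j ∈ Finset.univ.erase k,
          max (μ {ω | ((W ⟨0, hp⟩ ω : ℝ) : EReal) ≤ b j}).toReal
              (μ {ω | ((S ⟨0, hp⟩ ω : ℝ) : EReal) ≤ b j}).toReal) *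
        |(μ {ω | ((W ⟨0, hp⟩ ω : ℝ) : EReal) ≤ b k}).toReal
          - (μ {ω | ((S ⟨0, hp⟩ ω : ℝ) : EReal) ≤ b k}).toReal| := by
  set W0 := W ⟨0, hp⟩ with hW0
  set S0 := S ⟨0, hp⟩ with hS0
  -- rewrite the negated sets
  have hset : ∀ (X : Ω → ℝ) (c : EReal),
      {ω | ((-(X ω) : ℝ) : EReal) ≤ -c} = {ω | c ≤ (X ω : EReal)} := by
    intro X c
    ext ω
    simp [EReal.coe_neg, EReal.neg_le_neg_iff]
  simp only [hset]
  -- transfer identical distributions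
  have htrans : ∀ (X : Fin p → Ω → ℝ), (∀ j, Measurable (X j)) →
      (∀ j, Measure.map (X j) μ = Measure.map (X ⟨0, hp⟩) μ) →
      ∀ (T : Set ℝ), MeasurableSet T → ∀ j, μ (X j ⁻¹' T) = μ (X ⟨0, hp⟩ ⁻¹' T) := by
    intro X hXm hXi T hT j
    rw [← Measure.map_apply (hXm j) hT, hXi j, Measure.map_apply (hXm _) hT]
  have hTmeas : ∀ j : Fin p, MeasurableSet {x : ℝ | a j ≤ (x : EReal) ∧ (x : EReal) ≤ b j} := by
    intro j
    have : {x : ℝ | a j ≤ (x : EReal) ∧ (x : EReal) ≤ b j}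
        = ((↑) : ℝ → EReal) ⁻¹' Set.Icc (a j) (b j) := rfl
    rw [this]
    exact measurable_coe_real_ereal measurableSet_Icc
  -- abbreviations
  set FW : EReal → ℝ := fun c => (μ {ω | (W0 ω : EReal) ≤ c}).toReal with hFW
  set FS : EReal → ℝ := fun c => (μ {ω | (S0 ω : EReal) ≤ c}).toReal with hFS
  set GW : EReal → ℝ := fun c => (μ {ω | c ≤ (W0 ω : EReal)}).toReal with hGW
  set GS : EReal → ℝ := fun c => (μ {ω | c ≤ (S0 ω : EReal)}).toReal with hGS
  set u : Fin p → ℝ := fun j => (μ {ω | a j ≤ (W0 ω : EReal) ∧ (W0 ω : EReal) ≤ b j}).toReal with hu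
  set v : Fin p → ℝ := fun j => (μ {ω | a j ≤ (S0 ω : EReal) ∧ (S0 ω : EReal) ≤ b j}).toReal with hv
  have hWj : ∀ j, (μ {ω | a j ≤ (W j ω : EReal) ∧ (W j ω : EReal) ≤ b j}).toReal = u j := by
    intro j
    have := htrans W hWmeas hWident _ (hTmeas j) j
    simp only [hu]
    congr 1
  have hSj : ∀ j, (μ {ω | a j ≤ (S j ω : EReal) ∧ (S j ω : EReal) ≤ b j}).toReal = v j := by
    intro j
    have := htrans S hSmeas hSident _ (hTmeas j) j
    simp only [hv]
    congr 1
  simp only [hWj, hSj]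
  -- key splitting
  have hU : ∀ j, u j = FW (b j) + GW (a j) - 1 := fun j =>
    interval_split μ W0 (hWmeas _) (a j) (b j) (hab j)
  have hV : ∀ j, v j = FS (b j) + GS (a j) - 1 := fun j =>
    interval_split μ S0 (hSmeas _) (a j) (b j) (hab j)
  -- bounds
  set c : Fin p → ℝ := fun j => min (max (GW (a j)) (GS (a j))) (max (FW (b j)) (FS (b j))) with hc
  set e : Fin p → ℝ := fun j => |GW (a j) - GS (a j)| + |FW (b j) - FS (b j)| with he
  have hmono : ∀ (A B : Set Ω), A ⊆ B → (μ A).toReal ≤ (μ B).toReal := fun A B h =>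
    ENNReal.toReal_mono (measure_ne_top μ _) (measure_mono h)
  have hucF : ∀ j, u j ≤ FW (b j) := fun j => hmono _ _ (fun ω h => h.2)
  have hucG : ∀ j, u j ≤ GW (a j) := fun j => hmono _ _ (fun ω h => h.1)
  have hvcF : ∀ j, v j ≤ FS (b j) := fun j => hmono _ _ (fun ω h => h.2)
  have hvcG : ∀ j, v j ≤ GS (a j) := fun j => hmono _ _ (fun ω h => h.1)
  have huc : ∀ j, u j ≤ c j := fun j =>
    le_min (le_trans (hucG j) (le_max_left _ _)) (le_trans (hucF j) (le_max_left _ _))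
  have hvc : ∀ j, v j ≤ c j := fun j =>
    le_min (le_trans (hvcG j) (le_max_right _ _)) (le_trans (hvcF j) (le_max_right _ _))
  have hupos : ∀ j, (0:ℝ) ≤ u j := fun j => ENNReal.toReal_nonneg
  have hvpos : ∀ j, (0:ℝ) ≤ v j := fun j => ENNReal.toReal_nonneg
  have hcpos : ∀ j, (0:ℝ) ≤ c j := fun j => le_trans (hupos j) (huc j)
  have hediff : ∀ j, |u j - v j| ≤ e j := by
    intro j
    rw [hU j, hV j]
    have : FW (b j) + GW (a j) - 1 - (FS (b j) + GS (a j) - 1)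
        = (GW (a j) - GS (a j)) + (FW (b j) - FS (b j)) := by ring
    rw [this]
    exact abs_add_le _ _
  have main := prod_diff_bound Finset.univ u v c e (fun i _ => hupos i) (fun i _ => hvpos i)
    (fun i _ => huc i) (fun i _ => hvc i) (fun i _ => hediff i)
  refine le_trans main ?_
  -- split the sum
  have hsplit : ∑ i : Fin p, (∏ j ∈ Finset.univ.erase i, c j) * e i
      = ∑ i : Fin p, ((∏ j ∈ Finset.univ.erase i, c j) * |GW (a i) - GS (a i)|
          + (∏ j ∈ Finset.univ.erase i, c j) * |FW (b i) - FS (b i)|) := by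
    apply Finset.sum_congr rfl
    intro i _
    rw [he]
    ring
  rw [hsplit, Finset.sum_add_distrib]
  apply add_le_add
  · apply Finset.sum_le_sum
    intro i _
    apply mul_le_mul_of_nonneg_right _ (abs_nonneg _)
    exact Finset.prod_le_prod (fun j _ => hcpos j) (fun j _ => min_le_left _ _)
  · apply Finset.sum_le_sum
    intro i _
    apply mul_le_mul_of_nonneg_right _ (abs_nonneg _)
    exact Finset.prod_le_prod (fun j _ => hcpos j) (fun j _ => min_le_right _ _)
end

section
/- Let Z be a real random variable with E Z² < ∞ and E Z² > 0, and define κₙ = sup{s > 0 : n s^{-2} E[Z² 1(|Z| ≤ s)] ≥ 1}. Then κₙ² / n = E[Z² 1(|Z| ≤ κₙ)] and κₙ/√n → √(E Z²) as n → ∞ if E Z² < ∞; in particular κₙ → ∞. -/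
open Real MeasureTheory Filter

/-- Properties of the truncation level `κₙ` of Bentkus–Götze (Lemma 1.3):
the fixed-point equation `κₙ²/n = E[Z²1(|Z| ≤ κₙ)]`, and
`κₙ/√n → √(E Z²)`; in particular `κₙ → ∞`. -/
theorem stmt14 {Ω : Type*} [MeasurableSpace Ω] (μ : Measure Ω) [IsProbabilityMeasure μ]
    (Z : Ω → ℝ) (hmeas : Measurable Z)
    (hint : Integrable (fun ω => (Z ω) ^ 2) μ)
    (hpos : 0 < ∫ ω, (Z ω) ^ 2 ∂μ)
    (κ : ℕ → ℝ)
    (hκ : ∀ n, κ n = sSup {s : ℝ | 0 < s ∧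
      1 ≤ (n : ℝ) / s ^ 2 * ∫ ω in {ω | |Z ω| ≤ s}, (Z ω) ^ 2 ∂μ}) :
    (∀ n : ℕ, 1 ≤ n →
      (κ n) ^ 2 / (n : ℝ) = ∫ ω in {ω | |Z ω| ≤ κ n}, (Z ω) ^ 2 ∂μ) ∧
    Filter.Tendsto (fun n : ℕ => κ n / Real.sqrt n) Filter.atTop
      (nhds (Real.sqrt (∫ ω, (Z ω) ^ 2 ∂μ))) ∧
    Filter.Tendsto κ Filter.atTop Filter.atTop := by
  set L : ℝ := ∫ ω, (Z ω) ^ 2 ∂μ with hL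
  set g : ℝ → ℝ := fun s => ∫ ω in {ω | |Z ω| ≤ s}, (Z ω) ^ 2 ∂μ with hgdef
  set S : ℕ → Set ℝ := fun n => {s : ℝ | 0 < s ∧ 1 ≤ (n : ℝ) / s ^ 2 * g s} with hSdef
  have hκ' : ∀ n, κ n = sSup (S n) := hκ
  have hms : ∀ s : ℝ, MeasurableSet {ω | |Z ω| ≤ s} := fun s =>
    measurableSet_le hmeas.abs measurable_const
  have hnn : ∀ ω, (0:ℝ) ≤ (Z ω) ^ 2 := fun ω => sq_nonneg _
  -- g is monotone
  have hg_mono : Monotone g := by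
    intro a b hab
    apply setIntegral_mono_set hint.integrableOn
      (Filter.Eventually.of_forall fun ω => hnn ω)
    exact Filter.Eventually.of_forall fun ω h => le_trans h hab
  have hg_nonneg : ∀ s, 0 ≤ g s := fun s =>
    setIntegral_nonneg (hms s) fun ω _ => hnn ω
  have hg_le : ∀ s, g s ≤ L := fun s =>
    setIntegral_le_integral hint (Filter.Eventually.of_forall fun ω => hnn ω)
  -- g(n) → L along ℕ
  have hg_nat : Tendsto (fun m : ℕ => g (m : ℝ)) atTop (nhds L) := by
    have hU : (⋃ m : ℕ, {ω | |Z ω| ≤ (m : ℝ)}) = Set.univ := by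
      ext ω
      simp only [Set.mem_iUnion, Set.mem_setOf_eq, Set.mem_univ, iff_true]
      obtain ⟨m, hm⟩ := exists_nat_ge (|Z ω|)
      exact ⟨m, hm⟩
    have := tendsto_setIntegral_of_monotone (μ := μ)
      (s := fun m : ℕ => {ω | |Z ω| ≤ (m : ℝ)}) (f := fun ω => (Z ω) ^ 2)
      (fun m => hms _) (fun a b hab ω h => by
        simp only [Set.mem_setOf_eq] at *
        exact h.trans (by exact_mod_cast hab))
      (by rw [hU]; exact hint.integrableOn)
    rwa [hU, setIntegral_univ] at this
  -- g → L at infinity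
  have hg_top : Tendsto g atTop (nhds L) := by
    have hbdd : BddAbove (Set.range g) := ⟨L, by rintro _ ⟨s, rfl⟩; exact hg_le s⟩
    have h1 : Tendsto g atTop (nhds (⨆ s, g s)) := tendsto_atTop_ciSup hg_mono hbdd
    have h2 : (⨆ s, g s) = L := by
      apply le_antisymm (ciSup_le hg_le)
      exact le_of_tendsto hg_nat (Filter.Eventually.of_forall fun m => le_ciSup hbdd (m : ℝ))
    rwa [h2] at h1
  -- right-continuity of g
  have hg_rc : ∀ c : ℝ, Tendsto (fun k : ℕ => g (c + 1 / (k + 1))) atTop (nhds (g c)) := by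
    intro c
    have hI : (⋂ k : ℕ, {ω | |Z ω| ≤ c + 1 / ((k : ℝ) + 1)}) = {ω | |Z ω| ≤ c} := by
      ext ω
      simp only [Set.mem_iInter, Set.mem_setOf_eq]
      constructor
      · intro h
        by_contra hc
        push_neg at hc
        obtain ⟨k, hk⟩ := exists_nat_one_div_lt (sub_pos.2 hc)
        exact absurd (h k) (by push_neg; linarith [hk])
      · intro h k
        have : (0:ℝ) < 1 / ((k : ℝ) + 1) := by positivity
        linarith
    have := tendsto_setIntegral_of_antitone (μ := μ)
      (s := fun k : ℕ => {ω | |Z ω| ≤ c + 1 / ((k : ℝ) + 1)}) (f := fun ω => (Z ω) ^ 2)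
      (fun k => hms _)
      (fun a b hab => by
        intro ω h
        simp only [Set.mem_setOf_eq] at *
        have hab' : (a : ℝ) ≤ b := Nat.cast_le.2 hab
        have : 1 / ((b : ℝ) + 1) ≤ 1 / ((a : ℝ) + 1) := by
          apply one_div_le_one_div_of_le (by positivity)
          linarith
        linarith)
      ⟨0, hint.integrableOn⟩
    rwa [hI] at this
  -- bounded above
  have hSbdd : ∀ n : ℕ, BddAbove (S n) := by
    intro n
    refine ⟨Real.sqrt ((n : ℝ) * L), ?_⟩
    rintro s ⟨hs, hle⟩
    have hsq : s ^ 2 ≤ (n : ℝ) * g s := by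
      rw [div_mul_eq_mul_div, le_div_iff₀ (by positivity)] at hle
      linarith
    have : s ^ 2 ≤ (n : ℝ) * L :=
      hsq.trans (mul_le_mul_of_nonneg_left (hg_le s) (Nat.cast_nonneg n))
    nlinarith [Real.sq_sqrt (show (0:ℝ) ≤ (n:ℝ) * L by positivity),
      Real.sqrt_nonneg ((n : ℝ) * L), hs]
  have hκ_nonneg : ∀ n, 0 ≤ κ n := by
    intro n
    rw [hκ']
    rcases Set.eq_empty_or_nonempty (S n) with h | h
    · rw [h, Real.sSup_empty]
    · obtain ⟨s, hs⟩ := h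
      exact le_trans hs.1.le (le_csSup (hSbdd n) hs)
  -- fixed point equation
  have key : ∀ n : ℕ, (S n).Nonempty → (κ n) ^ 2 = (n : ℝ) * g (κ n) := by
    intro n hne
    obtain ⟨u, hu_mono, hu_tendsto, hu_mem⟩ := exists_seq_tendsto_sSup hne (hSbdd n)
    rw [← hκ'] at hu_tendsto
    have hκpos : 0 < κ n := by
      obtain ⟨s, hs⟩ := hne
      exact lt_of_lt_of_le hs.1 (by rw [hκ']; exact le_csSup (hSbdd n) hs)
    -- lower bound: κ² ≤ n g(κ)
    have hlow : (κ n) ^ 2 ≤ (n : ℝ) * g (κ n) := by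
      have hle : ∀ k, (u k) ^ 2 ≤ (n : ℝ) * g (κ n) := by
        intro k
        obtain ⟨hp, hk⟩ := hu_mem k
        rw [div_mul_eq_mul_div, le_div_iff₀ (by positivity)] at hk
        have huκ : u k ≤ κ n := by rw [hκ']; exact le_csSup (hSbdd n) (hu_mem k)
        calc (u k) ^ 2 ≤ (n : ℝ) * g (u k) := by linarith
          _ ≤ (n : ℝ) * g (κ n) :=
            mul_le_mul_of_nonneg_left (hg_mono huκ) (Nat.cast_nonneg n)
      exact le_of_tendsto ((hu_tendsto.pow 2)) (Filter.Eventually.of_forall hle)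
    -- upper bound
    have hhigh : (n : ℝ) * g (κ n) ≤ (κ n) ^ 2 := by
      have hlt : ∀ k : ℕ, (n : ℝ) * g (κ n + 1 / ((k : ℝ) + 1)) ≤ (κ n + 1 / ((k : ℝ) + 1)) ^ 2 := by
        intro k
        have hk1 : (0:ℝ) < 1 / ((k : ℝ) + 1) := by positivity
        set t := κ n + 1 / ((k : ℝ) + 1) with ht
        have htpos : 0 < t := by positivity
        have htnot : t ∉ S n := by
          intro hmem
          have h1 : t ≤ κ n := by rw [hκ']; exact le_csSup (hSbdd n) hmem
          rw [ht] at h1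
          linarith
        have : ¬ (1 ≤ (n : ℝ) / t ^ 2 * g t) := fun h => htnot ⟨htpos, h⟩
        push_neg at this
        rw [div_mul_eq_mul_div, div_lt_iff₀ (by positivity)] at this
        linarith
      have h1 : Tendsto (fun k : ℕ => (n : ℝ) * g (κ n + 1 / ((k : ℝ) + 1))) atTop
          (nhds ((n : ℝ) * g (κ n))) := (hg_rc (κ n)).const_mul _
      have h2 : Tendsto (fun k : ℕ => (κ n + 1 / ((k : ℝ) + 1)) ^ 2) atTop
          (nhds ((κ n) ^ 2)) := by
        have : Tendsto (fun k : ℕ => κ n + 1 / ((k : ℝ) + 1)) atTop (nhds (κ n + 0)) :=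
          tendsto_const_nhds.add (tendsto_one_div_add_atTop_nhds_zero_nat)
        rw [add_zero] at this
        exact this.pow 2
      exact le_of_tendsto_of_tendsto' h1 h2 hlt
    linarith
  -- eventual nonemptiness
  have hne_ev : ∀ M : ℝ, ∃ N : ℕ, ∀ n ≥ N, ∃ s ∈ S n, M ≤ s := by
    intro M
    have : ∀ᶠ m : ℕ in atTop, L / 2 < g (m : ℝ) :=
      hg_nat.eventually_const_lt (by linarith)
    obtain ⟨m₀, hm₀⟩ := this.exists_forall_of_atTop
    obtain ⟨m₁, hm₁⟩ := exists_nat_ge (max M 1)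
    set m := max m₀ m₁ with hm
    have hgm : 0 < g (m : ℝ) := lt_of_lt_of_le (by linarith) (hm₀ m (le_max_left _ _)).le
    have hm₁m : (m₁ : ℝ) ≤ m := Nat.cast_le.2 (le_max_right m₀ m₁)
    have h1m₁ : (1:ℝ) ≤ m₁ := le_trans (le_max_right _ _) hm₁
    have hmpos : (0:ℝ) < m := by linarith
    obtain ⟨N, hN⟩ := exists_nat_ge ((m : ℝ) ^ 2 / g (m : ℝ))
    refine ⟨N, fun n hn => ⟨(m : ℝ), ⟨hmpos, ?_⟩, ?_⟩⟩
    · rw [div_mul_eq_mul_div, le_div_iff₀ (by positivity), one_mul]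
      have hnN : (N : ℝ) ≤ n := by exact_mod_cast hn
      rw [div_le_iff₀ hgm] at hN
      calc (m : ℝ) ^ 2 ≤ N * g (m : ℝ) := hN
        _ ≤ n * g (m : ℝ) := mul_le_mul_of_nonneg_right hnN hgm.le
    · calc M ≤ max M 1 := le_max_left _ _
        _ ≤ m₁ := hm₁
        _ ≤ m := hm₁m
  -- part 3
  have part3 : Tendsto κ atTop atTop := by
    rw [tendsto_atTop_atTop]
    intro M
    obtain ⟨N, hN⟩ := hne_ev M
    refine ⟨N, fun n hn => ?_⟩
    obtain ⟨s, hs, hMs⟩ := hN n hn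
    exact hMs.trans (by rw [hκ']; exact le_csSup (hSbdd n) hs)
  -- part 1
  have part1 : ∀ n : ℕ, 1 ≤ n → (κ n) ^ 2 / (n : ℝ) = g (κ n) := by
    intro n hn
    have hnpos : (0:ℝ) < n := by exact_mod_cast hn
    rcases Set.eq_empty_or_nonempty (S n) with h | h
    · have hκ0 : κ n = 0 := by rw [hκ', h, Real.sSup_empty]
      rw [hκ0]
      norm_num
      rw [eq_comm]
      apply setIntegral_eq_zero_of_forall_eq_zero
      intro ω hω
      simp only [Set.mem_setOf_eq] at hω
      have : Z ω = 0 := abs_eq_zero.mp (le_antisymm hω (abs_nonneg _))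
      simp [this]
    · rw [key n h, mul_comm, mul_div_assoc, div_self hnpos.ne', mul_one]
  -- part 2
  have part2 : Tendsto (fun n : ℕ => κ n / Real.sqrt n) atTop (nhds (Real.sqrt L)) := by
    have hgl : Tendsto (fun n : ℕ => g (κ n)) atTop (nhds L) := hg_top.comp part3
    have hsq : Tendsto (fun n : ℕ => (κ n) ^ 2 / (n : ℝ)) atTop (nhds L) := by
      apply hgl.congr'
      filter_upwards [Filter.eventually_ge_atTop 1] with n hn
      exact (part1 n hn).symm
    have h1 : Tendsto (fun n : ℕ => Real.sqrt ((κ n) ^ 2 / (n : ℝ))) atTop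
        (nhds (Real.sqrt L)) := (Real.continuous_sqrt.tendsto L).comp hsq
    apply h1.congr'
    filter_upwards [Filter.eventually_ge_atTop 1] with n hn
    have hnpos : (0:ℝ) < n := by exact_mod_cast hn
    rw [Real.sqrt_div (sq_nonneg _), Real.sqrt_sq (hκ_nonneg n)]
  exact ⟨part1, part2, part3⟩
end

section
/- For all x ≥ 1 and integers n ≥ 2, the gap x − x·√(n/(n + x² − 1)) is at most (x³ + x)/√(n(n−1)). -/
open Real

/-- For `x ≥ 1` and `n ≥ 2`, `x − x√(n/(n+x²−1)) ≤ (x³+x)/√(n(n−1))`. -/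
theorem stmt17 (n : ℕ) (hn : 2 ≤ n) (x : ℝ) (hx : 1 ≤ x) :
    x - x * Real.sqrt ((n : ℝ) / ((n : ℝ) + x ^ 2 - 1))
      ≤ (x ^ 3 + x) / Real.sqrt ((n : ℝ) * ((n : ℝ) - 1)) := by
  have hN : (2:ℝ) ≤ (n:ℝ) := by exact_mod_cast hn
  have hx0 : (0:ℝ) < x := lt_of_lt_of_le one_pos hx
  have ht : (0:ℝ) ≤ x ^ 2 - 1 := by nlinarith
  have ha : (0:ℝ) < (n:ℝ) + x ^ 2 - 1 := by nlinarith
  set s := Real.sqrt ((n : ℝ) / ((n : ℝ) + x ^ 2 - 1)) with hs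
  have hs0 : 0 ≤ s := Real.sqrt_nonneg _
  have hs1 : s ≤ 1 := by
    rw [hs]
    exact Real.sqrt_le_one.2 ((div_le_one ha).2 (by nlinarith))
  have hssq : s ^ 2 * ((n:ℝ) + x ^ 2 - 1) = (n:ℝ) := by
    rw [hs, Real.sq_sqrt (by positivity : (0:ℝ) ≤ (n:ℝ) / ((n:ℝ) + x ^ 2 - 1))]
    field_simp
  have key : x - x * s ≤ x * (x ^ 2 - 1) / (n:ℝ) := by
    rw [le_div_iff₀ (by linarith : (0:ℝ) < (n:ℝ))]
    nlinarith [mul_nonneg (mul_nonneg (sub_nonneg.2 hs1) hx0.le) ht,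
      mul_nonneg (mul_nonneg (sub_nonneg.2 hs1) hx0.le) hs0,
      mul_nonneg (mul_nonneg (mul_nonneg (sub_nonneg.2 hs1) hx0.le) hs0) ht]
  have hsq : Real.sqrt ((n:ℝ) * ((n:ℝ) - 1)) ≤ (n:ℝ) := by
    have h := Real.sqrt_le_sqrt (show (n:ℝ) * ((n:ℝ) - 1) ≤ (n:ℝ) ^ 2 by nlinarith)
    rwa [Real.sqrt_sq (by linarith)] at h
  have hsqp : 0 < Real.sqrt ((n:ℝ) * ((n:ℝ) - 1)) := by
    apply Real.sqrt_pos.2; nlinarith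
  have h2 : x * (x ^ 2 - 1) / (n:ℝ) ≤ (x ^ 3 + x) / Real.sqrt ((n:ℝ) * ((n:ℝ) - 1)) := by
    apply div_le_div₀ (by positivity) (by nlinarith) hsqp hsq
  linarith
end
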